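/- Let G=(V,E) be a general dissimilarity graph. Then G contains an unbalanced cycle if and only if there exists an edge e=(s,t)∈E with w(e) > d(s,t); and if G contains an unbalanced cycle, then δ(G) = max_{e=(s,t)∈E} ( w(e) − d(s,t) ). -/

import Mathlib

open SimpleGraph

noncomputable section

variable {V : Type*}

/-- The length of a walk: the sum of the weights of its edges. -/
def wlen {G : SimpleGraph V} (w : Sym2 V → ℝ) {u v : V} (p : G.Walk u v) : ℝ :=
  (p.edges.map w).sum

/-- The shortest-path distance between two vertices: the minimum length of a path. -/
def spDist (G : SimpleGraph V) (w : Sym2 V → ℝ) (u v : V) : ℝ :=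
  sInf {x : ℝ | ∃ p : G.Walk u v, p.IsPath ∧ wlen w p = x}

/-- The number of distinct shortest paths from `u` to `v`. -/
def csp (G : SimpleGraph V) (w : Sym2 V → ℝ) (u v : V) : ℕ :=
  Nat.card {p : G.Walk u v // p.IsPath ∧ wlen w p = spDist G w u v}

/-- `c` is the edge set of some cycle of `G`.  (A cycle is determined, up to
rotation and reflection, by its edge set.) -/
def IsCycleSet [DecidableEq V] (G : SimpleGraph V) (c : Finset (Sym2 V)) : Prop :=
  ∃ (v : V) (p : G.Walk v v), p.IsCycle ∧ p.edges.toFinset = c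

/-- `e` is a top edge of the cycle with edge set `c`: it lies in `c` and its
weight strictly exceeds the sum of the weights of all the other edges of `c`. -/
def TopOfSet [DecidableEq V] (w : Sym2 V → ℝ) (c : Finset (Sym2 V)) (e : Sym2 V) : Prop :=
  e ∈ c ∧ ∑ f ∈ c.erase e, w f < w e

/-- A cycle is unbalanced if it has a top edge. -/
def UnbalancedSet [DecidableEq V] (w : Sym2 V → ℝ) (c : Finset (Sym2 V)) : Prop :=
  ∃ e, TopOfSet w c e

/-- `S` contains at least one edge of every unbalanced cycle. -/
def RegularCoverSet [DecidableEq V] (G : SimpleGraph V) (w : Sym2 V → ℝ)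
    (S : Set (Sym2 V)) : Prop :=
  ∀ c : Finset (Sym2 V), IsCycleSet G c → UnbalancedSet w c → ∃ e ∈ c, e ∈ S

/-- `S` contains at least one non-top edge of every unbalanced cycle. -/
def NonTopCoverSet [DecidableEq V] (G : SimpleGraph V) (w : Sym2 V → ℝ)
    (S : Set (Sym2 V)) : Prop :=
  ∀ c : Finset (Sym2 V), IsCycleSet G c → UnbalancedSet w c →
    ∃ e ∈ c, e ∈ S ∧ ¬ TopOfSet w c e

/-- The deficit of a cycle with edge set `c`: the largest edge weight minus the
sum of the weights of all the other edges. -/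
def deficitSet (w : Sym2 V → ℝ) (c : Finset (Sym2 V)) : ℝ :=
  2 * sSup (w '' (c : Set (Sym2 V))) - ∑ f ∈ c, w f

/-- `δ(G)`: the maximum deficit over all cycles of `G`. -/
def deltaG [DecidableEq V] (G : SimpleGraph V) (w : Sym2 V → ℝ) : ℝ :=
  sSup {x : ℝ | ∃ c : Finset (Sym2 V), IsCycleSet G c ∧ deficitSet w c = x}

/-- `N_T(e, a)`: the number of distinct unbalanced cycles of deficit `a`
whose top edge is `e`. -/
def NT [DecidableEq V] (G : SimpleGraph V) (w : Sym2 V → ℝ) (e : Sym2 V) (a : ℝ) : ℕ :=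
  Nat.card {c : Finset (Sym2 V) // IsCycleSet G c ∧ TopOfSet w c e ∧ deficitSet w c = a}

/-- `N_U(e, a)`: the number of distinct unbalanced cycles of deficit `a`
containing `e` as a non-top edge. -/
def NU [DecidableEq V] (G : SimpleGraph V) (w : Sym2 V → ℝ) (e : Sym2 V) (a : ℝ) : ℕ :=
  Nat.card {c : Finset (Sym2 V) // IsCycleSet G c ∧ UnbalancedSet w c ∧
    e ∈ c ∧ ¬ TopOfSet w c e ∧ deficitSet w c = a}

/-!
Deleting an edge `e = s(s, t)` from a cycle leaves an `s`–`t` path, so the deficit of a cycle,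
attained at its heaviest edge `e`, is at most `w e - d(s, t)`. Conversely, when `d(s, t) < w e`,
a shortest `s`–`t` path closed up by `e` is a cycle whose deficit is exactly `w e - d(s, t)`;
edges with `d(s, t) ≥ w e` contribute nonpositive values, below the positive deficit of any
unbalanced cycle.
-/

section

variable {G : SimpleGraph V} {w : Sym2 V → ℝ}

lemma le_wlen_of_mem_edges (hw : ∀ e ∈ G.edgeSet, 0 ≤ w e) {u v : V} {p : G.Walk u v}
    {e : Sym2 V} (he : e ∈ p.edges) : w e ≤ wlen w p := by
  refine List.single_le_sum (fun x hx => ?_) _ (List.mem_map_of_mem he)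
  obtain ⟨f, hf, rfl⟩ := List.mem_map.mp hx
  exact hw f (p.edges_subset_edgeSet hf)

lemma sum_toFinset_edges_eq_wlen [DecidableEq V] {u v : V} {p : G.Walk u v} (hp : p.IsTrail) :
    ∑ f ∈ p.edges.toFinset, w f = wlen w p :=
  List.sum_toFinset w hp.edges_nodup

lemma finite_setOf_isPath_wlen [Finite V] (u v : V) :
    {x : ℝ | ∃ p : G.Walk u v, p.IsPath ∧ wlen w p = x}.Finite := by
  classical
  have := Fintype.ofFinite V
  refine (Set.finite_range fun p : G.Path u v => wlen w (p : G.Walk u v)).subset ?_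
  rintro _ ⟨p, hp, rfl⟩
  exact ⟨⟨p, hp⟩, rfl⟩

lemma spDist_le_wlen [Finite V] {u v : V} {p : G.Walk u v} (hp : p.IsPath) :
    spDist G w u v ≤ wlen w p :=
  csInf_le (finite_setOf_isPath_wlen u v).bddBelow ⟨p, hp, rfl⟩

lemma exists_isPath_wlen_eq_spDist [Finite V] {u v : V} (h : G.Reachable u v) :
    ∃ p : G.Walk u v, p.IsPath ∧ wlen w p = spDist G w u v := by
  classical
  obtain ⟨q⟩ := h
  have hne : {x : ℝ | ∃ p : G.Walk u v, p.IsPath ∧ wlen w p = x}.Nonempty :=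
    ⟨_, q.toPath, q.toPath.2, rfl⟩
  exact hne.csInf_mem (finite_setOf_isPath_wlen u v)

lemma SimpleGraph.Walk.IsPath.end_notMem_dropLast_support {u v : V} {p : G.Walk u v} (hp : p.IsPath) :
    v ∉ p.support.dropLast := by
  have hnodup := hp.support_nodup
  rw [← p.dropLast_support_concat, List.nodup_append] at hnodup
  exact fun hv => hnodup.2.2 v hv v (List.mem_singleton_self v) rfl

/-- Rotating the cycle to start at the tail of a dart of `e`, that dart must come first: a later
occurrence would make the tail a vertex of the remaining path before its end. -/
lemma SimpleGraph.Walk.IsCycle.exists_cons_isPath [DecidableEq V] {x : V} {p : G.Walk x x} (hp : p.IsCycle)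
    {e : Sym2 V} (he : e ∈ p.edges) :
    ∃ (a b : V) (q : G.Walk b a), G.Adj a b ∧ e = s(a, b) ∧ q.IsPath ∧
      s(a, b) ∉ q.edges ∧ p.edges.toFinset = insert s(a, b) q.edges.toFinset := by
  obtain ⟨d, hd, rfl⟩ := List.mem_map.mp he
  have hfst : d.fst ∈ p.support := Walk.dart_fst_mem_support_of_mem_darts _ hd
  have hrot := hp.rotate hfst
  have hd' : d ∈ (p.rotate _ hfst).darts := (p.rotate_darts _ hfst).perm.mem_iff.mpr hd
  obtain ⟨b, h, q, hq⟩ := Walk.not_nil_iff.mp hrot.not_nil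
  have hedges : p.edges.toFinset = (Walk.cons h q).edges.toFinset := by
    ext f
    simp only [List.mem_toFinset, ← hq, (p.rotate_edges _ hfst).perm.mem_iff]
  rw [hq, Walk.cons_isCycle_iff] at hrot
  rw [hq, Walk.darts_cons, List.mem_cons] at hd'
  obtain ⟨hqpath, hqe⟩ := hrot
  have hd_eq : d = ⟨(d.fst, b), h⟩ := by
    refine hd'.resolve_right fun hdq => hqpath.end_notMem_dropLast_support ?_
    rw [← Walk.map_fst_darts]
    exact List.mem_map_of_mem hdq
  refine ⟨d.fst, b, q, h, by rw [hd_eq]; rfl, hqpath, hqe, ?_⟩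
  rw [hedges, Walk.edges_cons, List.toFinset_cons]

lemma IsCycleSet.nonempty [DecidableEq V] {c : Finset (Sym2 V)} (hc : IsCycleSet G c) :
    c.Nonempty := by
  obtain ⟨x, p, hp, rfl⟩ := hc
  obtain ⟨e, he⟩ := List.exists_mem_of_ne_nil _ (mt Walk.edges_eq_nil.mp hp.not_nil)
  exact ⟨e, List.mem_toFinset.mpr he⟩

lemma IsCycleSet.exists_spDist_le_sum_erase [Finite V] [DecidableEq V] {c : Finset (Sym2 V)}
    (hc : IsCycleSet G c) {e : Sym2 V} (he : e ∈ c) :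
    ∃ u v : V, G.Adj u v ∧ e = s(u, v) ∧ spDist G w u v ≤ ∑ f ∈ c.erase e, w f := by
  obtain ⟨x, p, hp, rfl⟩ := hc
  obtain ⟨a, b, q, h, rfl, hq, hqe, hedges⟩ := hp.exists_cons_isPath (List.mem_toFinset.mp he)
  refine ⟨b, a, h.symm, Sym2.eq_swap, ?_⟩
  rw [hedges, Finset.erase_insert (by simpa using hqe), sum_toFinset_edges_eq_wlen hq.isTrail]
  exact spDist_le_wlen hq

end

section Deficit

variable {w : Sym2 V → ℝ} {c : Finset (Sym2 V)} {e : Sym2 V}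

lemma deficitSet_eq_sub_sum_erase [DecidableEq V] (he : e ∈ c) (hmax : ∀ f ∈ c, w f ≤ w e) :
    deficitSet w c = w e - ∑ f ∈ c.erase e, w f := by
  have hsup : sSup (w '' (c : Set (Sym2 V))) = w e :=
    IsGreatest.csSup_eq ⟨⟨e, he, rfl⟩, by rintro _ ⟨f, hf, rfl⟩; exact hmax f hf⟩
  rw [deficitSet, hsup, ← Finset.add_sum_erase c w he]
  ring

lemma sub_sum_erase_le_deficitSet [DecidableEq V] (he : e ∈ c) :
    w e - ∑ f ∈ c.erase e, w f ≤ deficitSet w c := by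
  have hle : w e ≤ sSup (w '' (c : Set (Sym2 V))) :=
    le_csSup (c.finite_toSet.image w).bddAbove ⟨e, he, rfl⟩
  rw [deficitSet, ← Finset.add_sum_erase c w he]
  linarith

lemma exists_deficitSet_eq_sub_sum_erase [DecidableEq V] (hc : c.Nonempty) :
    ∃ e ∈ c, deficitSet w c = w e - ∑ f ∈ c.erase e, w f := by
  obtain ⟨e, he, hmax⟩ := c.exists_max_image w hc
  exact ⟨e, he, deficitSet_eq_sub_sum_erase he hmax⟩

lemma UnbalancedSet.deficitSet_pos [DecidableEq V] (hc : UnbalancedSet w c) :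
    0 < deficitSet w c := by
  obtain ⟨e, he, htop⟩ := hc
  linarith [sub_sum_erase_le_deficitSet (w := w) he]

end Deficit

section

variable [DecidableEq V] {G : SimpleGraph V} {w : Sym2 V → ℝ}

lemma IsCycleSet.exists_deficitSet_le [Finite V] {c : Finset (Sym2 V)} (hc : IsCycleSet G c) :
    ∃ u v : V, G.Adj u v ∧ deficitSet w c ≤ w s(u, v) - spDist G w u v := by
  obtain ⟨e, he, hdef⟩ := exists_deficitSet_eq_sub_sum_erase (w := w) hc.nonempty
  obtain ⟨u, v, huv, rfl, hle⟩ := hc.exists_spDist_le_sum_erase (w := w) he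
  exact ⟨u, v, huv, by linarith⟩

lemma exists_isCycleSet_topOfSet_deficitSet_eq [Finite V] (hw : ∀ e ∈ G.edgeSet, 0 ≤ w e)
    {u v : V} (huv : G.Adj u v) (hlt : spDist G w u v < w s(u, v)) :
    ∃ c : Finset (Sym2 V), IsCycleSet G c ∧ TopOfSet w c s(u, v) ∧
      deficitSet w c = w s(u, v) - spDist G w u v := by
  obtain ⟨p, hp, hlen⟩ := exists_isPath_wlen_eq_spDist (w := w) huv.reachable
  have hshort : ∀ f ∈ p.edges, w f < w s(u, v) := fun f hf =>
    (le_wlen_of_mem_edges hw hf).trans_lt (hlen ▸ hlt)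
  have hnotin : s(u, v) ∉ p.edges := fun h => (hshort _ h).false
  have hcyc : (Walk.cons huv.symm p).IsCycle :=
    Walk.cons_isCycle_iff _ _ |>.mpr ⟨hp, by rwa [Sym2.eq_swap]⟩
  have hedges : (Walk.cons huv.symm p).edges.toFinset = insert s(u, v) p.edges.toFinset := by
    simp [Sym2.eq_swap]
  have hsum : ∑ f ∈ (insert s(u, v) p.edges.toFinset).erase s(u, v), w f = spDist G w u v := by
    rw [Finset.erase_insert (by simpa using hnotin), sum_toFinset_edges_eq_wlen hp.isTrail, hlen]
  have hmax : ∀ f ∈ insert s(u, v) p.edges.toFinset, w f ≤ w s(u, v) := by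
    simp only [Finset.mem_insert, List.mem_toFinset]
    rintro f (rfl | hf)
    exacts [le_rfl, (hshort f hf).le]
  refine ⟨_, ⟨v, _, hcyc, hedges⟩, ⟨Finset.mem_insert_self _ _, hsum ▸ hlt⟩, ?_⟩
  rw [deficitSet_eq_sub_sum_erase (Finset.mem_insert_self _ _) hmax, hsum]

end

theorem stmt17_general [Fintype V] [DecidableEq V] (G : SimpleGraph V)
    (w : Sym2 V → ℝ) (hw : ∀ e ∈ G.edgeSet, 0 < w e) :
    ((∃ c : Finset (Sym2 V), IsCycleSet G c ∧ UnbalancedSet w c) ↔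
      ∃ u v : V, G.Adj u v ∧ spDist G w u v < w s(u, v)) ∧
    ((∃ c : Finset (Sym2 V), IsCycleSet G c ∧ UnbalancedSet w c) →
      deltaG G w =
        sSup {x : ℝ | ∃ u v : V, G.Adj u v ∧ x = w s(u, v) - spDist G w u v}) := by
  have hw₀ : ∀ e ∈ G.edgeSet, 0 ≤ w e := fun e he => (hw e he).le
  refine ⟨⟨?_, ?_⟩, ?_⟩
  · rintro ⟨c, hc, hunb⟩
    obtain ⟨u, v, huv, hle⟩ := hc.exists_deficitSet_le (w := w)
    exact ⟨u, v, huv, by linarith [hunb.deficitSet_pos]⟩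
  · rintro ⟨u, v, huv, hlt⟩
    obtain ⟨c, hc, htop, -⟩ := exists_isCycleSet_topOfSet_deficitSet_eq hw₀ huv hlt
    exact ⟨c, hc, _, htop⟩
  · rintro ⟨c₀, hc₀, hunb₀⟩
    refine csSup_eq_csSup_of_forall_exists_le ?_ ?_
    · rintro _ ⟨c, hc, rfl⟩
      obtain ⟨u, v, huv, hle⟩ := hc.exists_deficitSet_le (w := w)
      exact ⟨_, ⟨u, v, huv, rfl⟩, hle⟩
    · rintro _ ⟨u, v, huv, rfl⟩
      by_cases hlt : spDist G w u v < w s(u, v)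
      · obtain ⟨c, hc, -, hdef⟩ := exists_isCycleSet_topOfSet_deficitSet_eq hw₀ huv hlt
        exact ⟨_, ⟨c, hc, rfl⟩, hdef.ge⟩
      · exact ⟨_, ⟨c₀, hc₀, rfl⟩, by linarith [hunb₀.deficitSet_pos]⟩

/-- `G` contains an unbalanced cycle iff some edge `e = (s,t)` has
`w(e) > d(s,t)`; and in that case `δ(G) = max_{e=(s,t) ∈ E} (w(e) − d(s,t))`. -/
theorem stmt17 [Fintype V] [DecidableEq V] (G : SimpleGraph V)
    (hconn : G.Connected) (w : Sym2 V → ℝ) (hw : ∀ e ∈ G.edgeSet, 0 < w e) :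
    ((∃ c : Finset (Sym2 V), IsCycleSet G c ∧ UnbalancedSet w c) ↔
      ∃ u v : V, G.Adj u v ∧ spDist G w u v < w s(u, v)) ∧
    ((∃ c : Finset (Sym2 V), IsCycleSet G c ∧ UnbalancedSet w c) →
      deltaG G w =
        sSup {x : ℝ | ∃ u v : V, G.Adj u v ∧ x = w s(u, v) - spDist G w u v}) :=
  stmt17_general G w hw
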